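/- There exists an absolute constant C > 0 such that for every nonnegative ω ∈ L¹(Π) ∩ L²(Π), the kinetic energy satisfies E(ω) ≤ C ‖ω‖_{L¹(Π)}^{3/2} ‖ω‖_{L²(Π)}^{1/2}. -/

import Mathlib

open MeasureTheory Real Filter

noncomputable section

/-- The upper half plane `Π = {x ∈ ℝ² : x₂ > 0}`. -/
def UHP : Set (ℝ × ℝ) := {x | 0 < x.2}

/-- Euclidean norm of a point of `ℝ²`. -/
def rad (x : ℝ × ℝ) : ℝ := Real.sqrt (x.1 ^ 2 + x.2 ^ 2)

/-- Modified Bessel function of the second kind of order `0`: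
`K₀(r) = ∫₀^∞ exp(-r cosh t) dt`. -/
def K0 (r : ℝ) : ℝ := ∫ t in Set.Ioi (0 : ℝ), Real.exp (-(r * Real.cosh t))

/-- Fundamental solution `G(x,y) = (1/2π) K₀(|x-y|)` of `−Δ + Id` on `ℝ²`. -/
def Gker (x y : ℝ × ℝ) : ℝ := (1 / (2 * Real.pi)) * K0 (rad (x - y))

/-- Reflection `x̄ = (x₁, −x₂)` across the `x₁`-axis. -/
def reflPt (x : ℝ × ℝ) : ℝ × ℝ := (x.1, -x.2)

/-- Green's function `G_Π(x,y) = G(x,y) − G(x̄,y)` of `−Δ + Id` on the half plane. -/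
def GUHP (x y : ℝ × ℝ) : ℝ := Gker x y - Gker (reflPt x) y

/-- The operator `𝒢ω(x) = ∫_Π G_Π(x,y) ω(y) dy`. -/
def Gop (ω : ℝ × ℝ → ℝ) (x : ℝ × ℝ) : ℝ := ∫ y in UHP, GUHP x y * ω y

/-- Kinetic energy `E(ω) = (1/2) ∫_Π ω 𝒢ω`. -/
def kineticE (ω : ℝ × ℝ → ℝ) : ℝ := (1 / 2) * ∫ x in UHP, ω x * Gop ω x

/-- Impulse `I(ω) = ∫_Π x₂ ω dx`. -/
def impulse (ω : ℝ × ℝ → ℝ) : ℝ := ∫ x in UHP, x.2 * ω x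

/-- `L¹(Π)` norm. -/
def normL1 (f : ℝ × ℝ → ℝ) : ℝ := ∫ x in UHP, |f x|

/-- `L²(Π)` norm. -/
def normL2 (f : ℝ × ℝ → ℝ) : ℝ := (∫ x in UHP, (f x) ^ 2) ^ ((1 : ℝ) / 2)

/-- `L^s(Π)` norm. -/
def normLs (s : ℝ) (f : ℝ × ℝ → ℝ) : ℝ := (∫ x in UHP, |f x| ^ s) ^ (1 / s)

/-- Nonnegative member of `L¹(Π) ∩ L²(Π)`. -/
def NonnegL1L2 (ω : ℝ × ℝ → ℝ) : Prop :=
  (∀ x ∈ UHP, 0 ≤ ω x) ∧ IntegrableOn ω UHP ∧ IntegrableOn (fun x => (ω x) ^ 2) UHP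

/-- Steiner symmetry in the `x₁` variable. -/
def SteinerSym (f : ℝ × ℝ → ℝ) : Prop :=
  (∀ x : ℝ × ℝ, f (-x.1, x.2) = f x) ∧
  ∀ x₂ : ℝ, 0 < x₂ → AntitoneOn (fun x₁ => f (x₁, x₂)) (Set.Ioi (0 : ℝ))

/-- The admissible class `𝒜_{μ,ν}`. -/
def InAdm (μ ν : ℝ) (ω : ℝ × ℝ → ℝ) : Prop :=
  (∀ x ∈ UHP, 0 ≤ ω x) ∧ IntegrableOn ω UHP ∧ IntegrableOn (fun x => (ω x) ^ 2) UHP ∧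
  IntegrableOn (fun x => x.2 * ω x) UHP ∧
  impulse ω = μ ∧ (∫ x in UHP, ω x) ≤ ν

/-- The energy functional `ℰ_λ(ω) = E(ω) − (1/(2λ)) ∫_Π ω²`. -/
def Efun (lam : ℝ) (ω : ℝ × ℝ → ℝ) : ℝ :=
  kineticE ω - (1 / (2 * lam)) * ∫ x in UHP, (ω x) ^ 2

/-- The supremum `S_{μ,ν,λ} = sup_{ω ∈ 𝒜_{μ,ν}} ℰ_λ(ω)`. -/
def Sval (lam μ ν : ℝ) : ℝ := sSup {s | ∃ ω, InAdm μ ν ω ∧ s = Efun lam ω}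

/-- `ω` is a maximizer, i.e. `ω ∈ Σ_{μ,ν,λ}`. -/
def IsMaximizer (lam μ ν : ℝ) (ω : ℝ × ℝ → ℝ) : Prop :=
  InAdm μ ν ω ∧ Efun lam ω = Sval lam μ ν

/-- Bessel function of the first kind of order one. -/
def J1 (r : ℝ) : ℝ :=
  ∑' k : ℕ, ((-1 : ℝ) ^ k / ((Nat.factorial k : ℝ) * (Nat.factorial (k + 1) : ℝ))) *
    (r / 2) ^ (2 * k + 1)

/-- Modified Bessel function of the second kind of order one. -/
def K1 (r : ℝ) : ℝ := ∫ t in Set.Ioi (0 : ℝ), Real.exp (-(r * Real.cosh t)) * Real.cosh t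

/-- The set of `t > 0` with `J₁(√(λ−1) t) ≠ 0` solving the transcendental equation
`t (K₁'(t)/K₁(t) + (λ−1)^{-1/2} J₁'(√(λ−1)t)/J₁(√(λ−1)t)) = λ/(λ−1)`. -/
def aSet (lam : ℝ) : Set ℝ :=
  {t | 0 < t ∧ J1 (Real.sqrt (lam - 1) * t) ≠ 0 ∧
    t * (deriv K1 t / K1 t +
      (1 / Real.sqrt (lam - 1)) *
        (deriv J1 (Real.sqrt (lam - 1) * t) / J1 (Real.sqrt (lam - 1) * t))) = lam / (lam - 1)}

/-- The smallest positive solution `a = a(λ)`. -/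
def aLam (lam : ℝ) : ℝ := sInf (aSet lam)

/-- The stream function `Ψ_L^{λ,W}` of the Lamb dipole, written in polar coordinates
`x₁ = r cos θ`, `x₂ = r sin θ` (so that `sin θ = x₂ / r`). -/
def PsiL (lam W : ℝ) (x : ℝ × ℝ) : ℝ :=
  if rad x ≤ aLam lam then
    ((-(W * aLam lam / (lam - 1)) / J1 (Real.sqrt (lam - 1) * aLam lam)) *
        J1 (Real.sqrt (lam - 1) * rad x) + (W * lam / (lam - 1)) * rad x) * (x.2 / rad x)
  else (W * aLam lam / K1 (aLam lam)) * K1 (rad x) * (x.2 / rad x)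

/-- The Lamb dipole `ω_L^{λ,W} = λ (Ψ_L^{λ,W} − W x₂)₊` restricted to `Π`. -/
def omegaL (lam W : ℝ) (x : ℝ × ℝ) : ℝ :=
  if 0 < x.2 then lam * max (PsiL lam W x - W * x.2) 0 else 0

/-- `ϱ(λ) = (∫_Π ω_L^{λ,1} dx) / I(ω_L^{λ,1})`. -/
def varrho (lam : ℝ) : ℝ := (∫ x in UHP, omegaL lam 1 x) / impulse (omegaL lam 1)

/-- The Laplacian on `ℝ²`, written coordinatewise. -/
def lap (ψ : ℝ × ℝ → ℝ) (x : ℝ × ℝ) : ℝ :=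
  deriv (deriv fun t => ψ (t, x.2)) x.1 + deriv (deriv fun t => ψ (x.1, t)) x.2

/-- Distance (in `L¹ ∩ L²` plus weighted `L¹`) from `ζ` to a set of functions `S`. -/
def distToSet (S : Set ((ℝ × ℝ) → ℝ)) (ζ : (ℝ × ℝ) → ℝ) : ℝ :=
  sInf {d | ∃ ω ∈ S, d = normL1 (fun x => ζ x - ω x) + normL2 (fun x => ζ x - ω x) +
    normL1 (fun x => x.2 * (ζ x - ω x))}

end

/-!
Since `cosh t ≥ t² / 4`, comparison with a Gaussian gives `K₀(r) ≤ √(π / r)`, hence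
`0 ≤ G(x, y) ≤ 1 / (2 √(π |x - y|))`, and `G_Π ≤ G`. Split `𝒢ω(x)` at the square of half-side
`t²` around `x`. Inside, `|x - y| ≥ √|x₁ - y₁| √|x₂ - y₂|` turns `∫ G²` into a product of two
one-dimensional integrals, `∫ G² ≤ 4 t² / π`, and Cauchy–Schwarz bounds this part by
`2 t ‖ω‖₂ / √π`; outside, `G ≤ 1 / (2 t √π)` bounds it by `‖ω‖₁ / (2 t √π)`. Then
`E(ω) ≤ ‖ω‖₁ sup 𝒢ω / 2`, and `t = (‖ω‖₁ / ‖ω‖₂)^{1/2}` gives `C = 5 / (4 √π)`.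
-/

open Set Metric

section

variable {α : Type*} [MeasurableSpace α] {μ : Measure α}

theorem integral_le_integral_of_ae_le_of_nonneg {f g : α → ℝ} (hfg : f ≤ᵐ[μ] g)
    (hg0 : 0 ≤ᵐ[μ] g) (hg : Integrable g μ) : ∫ y, f y ∂μ ≤ ∫ y, g y ∂μ := by
  by_cases hf : Integrable f μ
  · exact integral_mono_ae hf hg hfg
  · rw [integral_undef hf]
    exact integral_nonneg_of_ae hg0

theorem integrable_mul_of_integrableOn_sq_of_le_compl {f g : α → ℝ} {s : Set α} {b : ℝ}
    (hs : MeasurableSet s) (hf : AEStronglyMeasurable f μ) (hf0 : ∀ y, 0 ≤ f y)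
    (hfs : IntegrableOn (fun y => f y ^ 2) s μ) (hfb : ∀ y ∉ s, f y ≤ b)
    (hg0 : 0 ≤ᵐ[μ] g) (hg : Integrable g μ) (hg2 : Integrable (fun y => g y ^ 2) μ) :
    Integrable (fun y => f y * g y) μ := by
  have hnear : IntegrableOn (fun y => f y * g y) s μ :=
    ((memLp_two_iff_integrable_sq hf.restrict).2 hfs).integrable_mul
      ((memLp_two_iff_integrable_sq hg.aestronglyMeasurable.restrict).2 hg2.restrict)
  have hfar : IntegrableOn (fun y => f y * g y) sᶜ μ := by
    refine (hg.integrableOn.const_mul b).mono' (hf.mul hg.aestronglyMeasurable).restrict ?_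
    filter_upwards [ae_restrict_of_ae hg0, ae_restrict_mem hs.compl] with y hy hys
    rw [norm_of_nonneg (mul_nonneg (hf0 y) hy)]
    exact mul_le_mul_of_nonneg_right (hfb y hys) hy
  simpa using hnear.union hfar

theorem integral_mul_le_of_integrableOn_sq_of_le_compl {f g : α → ℝ} {s : Set α} {b : ℝ}
    (hs : MeasurableSet s) (hf : AEStronglyMeasurable f μ) (hf0 : ∀ y, 0 ≤ f y)
    (hfs : IntegrableOn (fun y => f y ^ 2) s μ) (hb : 0 ≤ b) (hfb : ∀ y ∉ s, f y ≤ b)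
    (hg0 : 0 ≤ᵐ[μ] g) (hg : Integrable g μ) (hg2 : Integrable (fun y => g y ^ 2) μ) :
    ∫ y, f y * g y ∂μ ≤ √(∫ y in s, f y ^ 2 ∂μ) * √(∫ y, g y ^ 2 ∂μ) + b * ∫ y, g y ∂μ := by
  have hfg := integrable_mul_of_integrableOn_sq_of_le_compl hs hf hf0 hfs hfb hg0 hg hg2
  have hfL2 : MemLp f 2 (μ.restrict s) := (memLp_two_iff_integrable_sq hf.restrict).2 hfs
  have hgL2 : MemLp g 2 (μ.restrict s) :=
    (memLp_two_iff_integrable_sq hg.aestronglyMeasurable.restrict).2 hg2.restrict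
  have hnear : ∫ y in s, f y * g y ∂μ ≤ √(∫ y in s, f y ^ 2 ∂μ) * √(∫ y, g y ^ 2 ∂μ) := by
    have h := integral_mul_le_Lp_mul_Lq_of_nonneg Real.HolderConjugate.two_two
      (ae_of_all _ hf0) (ae_restrict_of_ae hg0) (by simpa using hfL2) (by simpa using hgL2)
    simp only [rpow_two] at h
    rw [← sqrt_eq_rpow, ← sqrt_eq_rpow] at h
    refine h.trans (mul_le_mul_of_nonneg_left (sqrt_le_sqrt ?_) (sqrt_nonneg _))
    exact setIntegral_le_integral hg2 (ae_of_all _ fun y => sq_nonneg _)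
  have hfar : ∫ y in sᶜ, f y * g y ∂μ ≤ b * ∫ y, g y ∂μ := by
    calc _ ≤ ∫ y in sᶜ, b * g y ∂μ := by
          refine integral_mono_ae hfg.integrableOn (hg.integrableOn.const_mul b) ?_
          filter_upwards [ae_restrict_of_ae hg0, ae_restrict_mem hs.compl] with y hy hys
          exact mul_le_mul_of_nonneg_right (hfb y hys) hy
      _ = b * ∫ y in sᶜ, g y ∂μ := integral_const_mul _ _
      _ ≤ b * ∫ y, g y ∂μ := mul_le_mul_of_nonneg_left (setIntegral_le_integral hg hg0) hb
  rw [← integral_add_compl hs hfg]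
  exact add_le_add hnear hfar

end

theorem intervalIntegrable_abs_rpow {r : ℝ} (hr : -1 < r) (a b : ℝ) :
    IntervalIntegrable (fun t : ℝ => |t| ^ r) volume a b := by
  have hpos (c : ℝ) (hc : 0 ≤ c) : IntervalIntegrable (fun t : ℝ => |t| ^ r) volume 0 c :=
    (intervalIntegral.intervalIntegrable_rpow' hr).congr fun t ht => by
      rw [uIoc_of_le hc] at ht
      simp only [abs_of_pos ht.1]
  have h (c : ℝ) : IntervalIntegrable (fun t : ℝ => |t| ^ r) volume 0 c := by
    rcases le_total 0 c with hc | hc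
    · exact hpos c hc
    · rw [IntervalIntegrable.iff_comp_neg (by simp)]
      simpa using hpos (-c) (by linarith)
  exact (h a).symm.trans (h b)

theorem integral_abs_rpow_of_nonneg {r : ℝ} (hr : -1 < r) {c : ℝ} (hc : 0 ≤ c) :
    ∫ t in (0 : ℝ)..c, |t| ^ r = c ^ (r + 1) / (r + 1) := by
  rw [intervalIntegral.integral_congr (g := fun t => t ^ r) fun t ht => by
      rw [uIcc_of_le hc] at ht
      simp only [abs_of_nonneg ht.1],
    integral_rpow (Or.inl hr), zero_rpow (by linarith), sub_zero]

theorem integral_abs_rpow_symm {r : ℝ} (hr : -1 < r) {c : ℝ} (hc : 0 ≤ c) :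
    ∫ t in -c..c, |t| ^ r = 2 * c ^ (r + 1) / (r + 1) := by
  have hneg : ∫ t in -c..0, |t| ^ r = ∫ t in (0 : ℝ)..c, |t| ^ r := by
    simpa using (intervalIntegral.integral_comp_neg (a := 0) (b := c) fun t => |t| ^ r).symm
  rw [← intervalIntegral.integral_add_adjacent_intervals (b := 0)
    (intervalIntegrable_abs_rpow hr _ _) (intervalIntegrable_abs_rpow hr _ _), hneg,
    integral_abs_rpow_of_nonneg hr hc]
  ring

theorem integrableOn_abs_sub_rpow_closedBall {r : ℝ} (hr : -1 < r) (a δ : ℝ) :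
    IntegrableOn (fun t : ℝ => |t - a| ^ r) (closedBall a δ) := by
  have h := ((intervalIntegrable_abs_rpow hr (a - δ - a) (a + δ - a)).comp_sub_right a).1
  rw [sub_add_cancel, sub_add_cancel] at h
  rw [Real.closedBall_eq_Icc, integrableOn_Icc_iff_integrableOn_Ioc]
  exact h

theorem integral_abs_sub_rpow_closedBall {r : ℝ} (hr : -1 < r) (a : ℝ) {δ : ℝ} (hδ : 0 ≤ δ) :
    ∫ t in closedBall a δ, |t - a| ^ r = 2 * δ ^ (r + 1) / (r + 1) := by
  rw [Real.closedBall_eq_Icc, integral_Icc_eq_integral_Ioc,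
    ← intervalIntegral.integral_of_le (by linarith),
    intervalIntegral.integral_comp_sub_right (fun t => |t| ^ r), sub_sub_cancel_left,
    add_sub_cancel_left, integral_abs_rpow_symm hr hδ]

theorem integrableOn_abs_sub_rpow_mul_closedBall {r : ℝ} (hr : -1 < r) (x : ℝ × ℝ) (δ : ℝ) :
    IntegrableOn (fun y : ℝ × ℝ => |y.1 - x.1| ^ r * |y.2 - x.2| ^ r) (closedBall x δ) := by
  rw [← closedBall_prod_same, IntegrableOn, Measure.volume_eq_prod, ← Measure.prod_restrict]
  exact (integrableOn_abs_sub_rpow_closedBall hr x.1 δ).mul_prod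
    (integrableOn_abs_sub_rpow_closedBall hr x.2 δ)

theorem integral_abs_sub_rpow_mul_closedBall {r : ℝ} (hr : -1 < r) (x : ℝ × ℝ) {δ : ℝ}
    (hδ : 0 ≤ δ) :
    ∫ y in closedBall x δ, |y.1 - x.1| ^ r * |y.2 - x.2| ^ r = (2 * δ ^ (r + 1) / (r + 1)) ^ 2 := by
  rw [← closedBall_prod_same, Measure.volume_eq_prod,
    setIntegral_prod_mul (fun t => |t - x.1| ^ r) (fun t => |t - x.2| ^ r),
    integral_abs_sub_rpow_closedBall hr _ hδ, integral_abs_sub_rpow_closedBall hr _ hδ, sq]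

theorem ae_fst_ne_and_snd_ne (x : ℝ × ℝ) : ∀ᵐ y : ℝ × ℝ, y.1 ≠ x.1 ∧ y.2 ≠ x.2 := by
  rw [Measure.volume_eq_prod]
  exact (Measure.quasiMeasurePreserving_fst.ae (Measure.ae_ne volume x.1)).and
    (Measure.quasiMeasurePreserving_snd.ae (Measure.ae_ne volume x.2))

theorem norm_le_rad (z : ℝ × ℝ) : ‖z‖ ≤ rad z := by
  rw [Prod.norm_def, max_le_iff, rad, Real.norm_eq_abs, Real.norm_eq_abs,
    ← sqrt_sq_eq_abs, ← sqrt_sq_eq_abs]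
  exact ⟨sqrt_le_sqrt (by nlinarith [sq_nonneg z.2]), sqrt_le_sqrt (by nlinarith [sq_nonneg z.1])⟩

theorem sqrt_abs_mul_sqrt_abs_le_rad (z : ℝ × ℝ) : √|z.1| * √|z.2| ≤ rad z := by
  rw [← sqrt_mul (abs_nonneg _), rad]
  apply sqrt_le_sqrt
  nlinarith [sq_nonneg (|z.1| - |z.2|), sq_abs z.1, sq_abs z.2]

theorem sq_div_four_le_cosh (t : ℝ) : t ^ 2 / 4 ≤ cosh t := by
  rw [← cosh_abs, cosh_eq, ← sq_abs]
  nlinarith [quadratic_le_exp_of_nonneg (abs_nonneg t), exp_pos (-|t|), abs_nonneg t]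

theorem K0_nonneg (r : ℝ) : 0 ≤ K0 r :=
  integral_nonneg fun _ => (exp_pos _).le

theorem K0_le_sqrt {r : ℝ} (hr : 0 < r) : K0 r ≤ √(π / r) := by
  calc K0 r ≤ ∫ t in Ioi (0 : ℝ), exp (-(r / 4) * t ^ 2) :=
        integral_mono_of_nonneg (ae_of_all _ fun _ => (exp_pos _).le)
          (integrable_exp_neg_mul_sq (by positivity)).integrableOn
          (ae_of_all _ fun t => exp_le_exp.2 (by nlinarith [sq_div_four_le_cosh t]))
    _ = √(π / r) := by
        rw [integral_gaussian_Ioi, div_div_eq_mul_div, show π * 4 / r = 2 ^ 2 * (π / r) by ring,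
          sqrt_mul (by norm_num), sqrt_sq (by norm_num)]
        ring

theorem measurable_K0 : Measurable K0 :=
  (continuous_exp.comp (continuous_fst.mul (continuous_cosh.comp continuous_snd)).neg
    ).stronglyMeasurable.integral_prod_right'.measurable

theorem Gker_nonneg (x y : ℝ × ℝ) : 0 ≤ Gker x y :=
  mul_nonneg (by positivity) (K0_nonneg _)

theorem measurable_Gker (x : ℝ × ℝ) : Measurable (Gker x) := by
  unfold Gker
  exact (measurable_K0.comp (by unfold rad; fun_prop)).const_mul _

theorem Gker_le {x y : ℝ × ℝ} (h : 0 < rad (x - y)) :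
    Gker x y ≤ 1 / (2 * √(π * rad (x - y))) := by
  calc Gker x y ≤ 1 / (2 * π) * √(π / rad (x - y)) :=
        mul_le_mul_of_nonneg_left (K0_le_sqrt h) (by positivity)
    _ = 1 / (2 * √(π * rad (x - y))) := by
        rw [sqrt_div' _ h.le, sqrt_mul pi_pos.le]
        field_simp
        exact sq_sqrt pi_pos.le

theorem Gker_le_of_lt_dist {x y : ℝ × ℝ} {δ : ℝ} (hδ : 0 < δ) (h : δ < dist y x) :
    Gker x y ≤ 1 / (2 * √(π * δ)) := by
  rw [dist_comm, dist_eq_norm] at h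
  have hrad := h.trans_le (norm_le_rad (x - y))
  exact (Gker_le (hδ.trans hrad)).trans
    (one_div_le_one_div_of_le (by positivity) (by gcongr))

theorem Gker_sq_le_ae (x : ℝ × ℝ) :
    ∀ᵐ y : ℝ × ℝ, Gker x y ^ 2 ≤
      (4 * π)⁻¹ * (|y.1 - x.1| ^ (-(1 / 2) : ℝ) * |y.2 - x.2| ^ (-(1 / 2) : ℝ)) := by
  -- only a.e.: on the lines `y₁ = x₁`, `y₂ = x₂` the right side is the junk `0 ^ (-1/2) = 0`
  filter_upwards [ae_fst_ne_and_snd_ne x] with y ⟨h1, h2⟩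
  have ha : 0 < |y.1 - x.1| := abs_pos.2 (sub_ne_zero.2 h1)
  have hb : 0 < |y.2 - x.2| := abs_pos.2 (sub_ne_zero.2 h2)
  have hrad : √|y.1 - x.1| * √|y.2 - x.2| ≤ rad (x - y) := by
    simpa [abs_sub_comm] using sqrt_abs_mul_sqrt_abs_le_rad (x - y)
  have hpos : 0 < rad (x - y) := lt_of_lt_of_le (by positivity) hrad
  rw [rpow_neg ha.le, rpow_neg hb.le, ← sqrt_eq_rpow, ← sqrt_eq_rpow]
  calc Gker x y ^ 2 ≤ (1 / (2 * √(π * rad (x - y)))) ^ 2 :=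
        pow_le_pow_left₀ (Gker_nonneg x y) (Gker_le hpos) 2
    _ = (4 * π)⁻¹ * (rad (x - y))⁻¹ := by
        rw [div_pow, mul_pow, sq_sqrt (by positivity)]
        ring
    _ ≤ (4 * π)⁻¹ * ((√|y.1 - x.1|)⁻¹ * (√|y.2 - x.2|)⁻¹) := by
        rw [← mul_inv (√|y.1 - x.1|)]
        exact mul_le_mul_of_nonneg_left (inv_anti₀ (by positivity) hrad) (by positivity)

theorem integrableOn_Gker_sq_closedBall (x : ℝ × ℝ) (δ : ℝ) :
    IntegrableOn (fun y => Gker x y ^ 2) (closedBall x δ) :=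
  ((integrableOn_abs_sub_rpow_mul_closedBall (r := -(1 / 2)) (by norm_num) x δ).const_mul
    (4 * π)⁻¹).mono'
    ((measurable_Gker x).pow_const 2).aestronglyMeasurable
    (by
      filter_upwards [ae_restrict_of_ae (Gker_sq_le_ae x)] with y hy
      rwa [norm_of_nonneg (sq_nonneg _)])

theorem setIntegral_Gker_sq_closedBall_le (x : ℝ × ℝ) {δ : ℝ} (hδ : 0 ≤ δ) :
    ∫ y in closedBall x δ, Gker x y ^ 2 ≤ 4 * δ / π := by
  calc _ ≤ ∫ y in closedBall x δ,
        (4 * π)⁻¹ * (|y.1 - x.1| ^ (-(1 / 2) : ℝ) * |y.2 - x.2| ^ (-(1 / 2) : ℝ)) :=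
        integral_mono_ae (integrableOn_Gker_sq_closedBall x δ)
          ((integrableOn_abs_sub_rpow_mul_closedBall (by norm_num) x δ).const_mul _)
          (ae_restrict_of_ae (Gker_sq_le_ae x))
    _ = 4 * δ / π := by
        rw [integral_const_mul, integral_abs_sub_rpow_mul_closedBall (by norm_num) x hδ,
          show (-(1 / 2) + 1 : ℝ) = 1 / 2 by norm_num, ← sqrt_eq_rpow, div_pow, mul_pow,
          sq_sqrt hδ]
        field_simp
        ring

theorem measurableSet_UHP : MeasurableSet UHP :=
  measurableSet_lt measurable_const measurable_snd

theorem normL1_eq_integral {ω : ℝ × ℝ → ℝ} (hω : ∀ x ∈ UHP, 0 ≤ ω x) :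
    normL1 ω = ∫ x in UHP, ω x :=
  setIntegral_congr_fun measurableSet_UHP fun x hx => abs_of_nonneg (hω x hx)

theorem normL2_eq_sqrt (ω : ℝ × ℝ → ℝ) : normL2 ω = √(∫ x in UHP, ω x ^ 2) :=
  (sqrt_eq_rpow _).symm

theorem normL1_nonneg (ω : ℝ × ℝ → ℝ) : 0 ≤ normL1 ω :=
  integral_nonneg fun _ => abs_nonneg _

theorem normL2_nonneg (ω : ℝ × ℝ → ℝ) : 0 ≤ normL2 ω :=
  rpow_nonneg (integral_nonneg fun _ => sq_nonneg _) _

theorem normL1_eq_zero_of_normL2_eq_zero {ω : ℝ × ℝ → ℝ}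
    (hω : IntegrableOn (fun x => ω x ^ 2) UHP) (h : normL2 ω = 0) : normL1 ω = 0 := by
  rw [normL2_eq_sqrt, sqrt_eq_zero (integral_nonneg fun _ => sq_nonneg _),
    integral_eq_zero_iff_of_nonneg (fun _ => sq_nonneg _) hω] at h
  refine integral_eq_zero_of_ae ?_
  filter_upwards [h] with x hx
  simpa using hx

theorem Gop_le {ω : ℝ × ℝ → ℝ} (hω : NonnegL1L2 ω) (x : ℝ × ℝ) {t : ℝ} (ht : 0 < t) :
    Gop ω x ≤ (2 * t * normL2 ω + normL1 ω / (2 * t)) / √π := by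
  obtain ⟨hnn, hL1, hL2⟩ := hω
  have hω0 : 0 ≤ᵐ[volume.restrict UHP] ω := ae_restrict_of_forall_mem measurableSet_UHP hnn
  have hfar : ∀ y ∉ closedBall x (t ^ 2), Gker x y ≤ 1 / (2 * (√π * t)) := by
    intro y hy
    rw [← sqrt_sq ht.le, ← sqrt_mul pi_pos.le]
    exact Gker_le_of_lt_dist (by positivity) (not_le.1 hy)
  have hnear_sq :
      ∫ y in closedBall x (t ^ 2), Gker x y ^ 2 ∂volume.restrict UHP ≤ 4 * t ^ 2 / π :=
    (integral_mono_measure (Measure.restrict_mono subset_rfl Measure.restrict_le_self)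
      (ae_of_all _ fun _ => sq_nonneg _) (integrableOn_Gker_sq_closedBall x _)).trans
      (setIntegral_Gker_sq_closedBall_le x (sq_nonneg t))
  have hnear : √(∫ y in closedBall x (t ^ 2), Gker x y ^ 2 ∂volume.restrict UHP) ≤ 2 * t / √π := by
    refine (sqrt_le_sqrt hnear_sq).trans_eq ?_
    rw [sqrt_div' _ pi_pos.le, show 4 * t ^ 2 = (2 * t) ^ 2 by ring, sqrt_sq (by positivity)]
  calc Gop ω x ≤ ∫ y in UHP, Gker x y * ω y := by
        refine integral_le_integral_of_ae_le_of_nonneg ?_ ?_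
          (integrable_mul_of_integrableOn_sq_of_le_compl measurableSet_closedBall
            (measurable_Gker x).aestronglyMeasurable (Gker_nonneg x)
            (integrableOn_Gker_sq_closedBall x _).restrict hfar hω0 hL1 hL2)
        · filter_upwards [hω0] with y hy
          exact mul_le_mul_of_nonneg_right (sub_le_self _ (Gker_nonneg _ _)) hy
        · filter_upwards [hω0] with y hy
          exact mul_nonneg (Gker_nonneg x y) hy
    _ ≤ √(∫ y in closedBall x (t ^ 2), Gker x y ^ 2 ∂volume.restrict UHP) *
          √(∫ y in UHP, ω y ^ 2) + 1 / (2 * (√π * t)) * ∫ y in UHP, ω y :=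
        integral_mul_le_of_integrableOn_sq_of_le_compl measurableSet_closedBall
          (measurable_Gker x).aestronglyMeasurable (Gker_nonneg x)
          (integrableOn_Gker_sq_closedBall x _).restrict (by positivity) hfar hω0 hL1 hL2
    _ ≤ 2 * t / √π * normL2 ω + 1 / (2 * (√π * t)) * normL1 ω := by
        rw [normL2_eq_sqrt, normL1_eq_integral hnn]
        gcongr
    _ = (2 * t * normL2 ω + normL1 ω / (2 * t)) / √π := by
        field_simp

theorem kineticE_le {ω : ℝ × ℝ → ℝ} (hω : NonnegL1L2 ω) {t : ℝ} (ht : 0 < t) :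
    kineticE ω ≤ normL1 ω / 2 * ((2 * t * normL2 ω + normL1 ω / (2 * t)) / √π) := by
  set B := (2 * t * normL2 ω + normL1 ω / (2 * t)) / √π
  have hB : 0 ≤ B := by
    have := normL1_nonneg ω
    have := normL2_nonneg ω
    positivity
  have hω0 : 0 ≤ᵐ[volume.restrict UHP] ω := ae_restrict_of_forall_mem measurableSet_UHP hω.1
  calc kineticE ω = 1 / 2 * ∫ x in UHP, ω x * Gop ω x := rfl
    _ ≤ 1 / 2 * ∫ x in UHP, ω x * B := by
        refine mul_le_mul_of_nonneg_left ?_ (by norm_num)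
        refine integral_le_integral_of_ae_le_of_nonneg ?_ ?_ (hω.2.1.mul_const B)
        · filter_upwards [hω0] with x hx
          exact mul_le_mul_of_nonneg_left (Gop_le hω x ht) hx
        · filter_upwards [hω0] with x hx
          exact mul_nonneg hx hB
    _ = normL1 ω / 2 * B := by
        rw [integral_mul_const, normL1_eq_integral hω.1]
        ring

/-- `E(ω) ≤ C ‖ω‖₁^{3/2} ‖ω‖₂^{1/2}`. -/
theorem stmt1 :
    ∃ C : ℝ, 0 < C ∧ ∀ ω : ℝ × ℝ → ℝ, NonnegL1L2 ω →
      kineticE ω ≤ C * normL1 ω ^ ((3 : ℝ) / 2) * normL2 ω ^ ((1 : ℝ) / 2) := by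
  refine ⟨5 / (4 * √π), by positivity, fun ω hω => ?_⟩
  rcases (normL1_nonneg ω).eq_or_lt with h1 | h1
  · have := normL2_nonneg ω
    calc kineticE ω ≤ _ := kineticE_le hω one_pos
      _ = 0 := by rw [← h1]; ring
      _ ≤ 5 / (4 * √π) * normL1 ω ^ ((3 : ℝ) / 2) * normL2 ω ^ ((1 : ℝ) / 2) := by
        rw [← h1]
        positivity
  have h2 : 0 < normL2 ω := (normL2_nonneg ω).lt_of_ne fun h =>
    h1.ne' (normL1_eq_zero_of_normL2_eq_zero hω.2.2 h.symm)
  -- `t` balances the near-field term `t ‖ω‖₂` against the far-field term `‖ω‖₁ / t`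
  refine (kineticE_le hω (t := √(normL1 ω) / √(normL2 ω)) (by positivity)).trans_eq ?_
  rw [show (3 : ℝ) / 2 = 1 / 2 * (3 : ℕ) by norm_num, rpow_mul_natCast (normL1_nonneg ω),
    ← sqrt_eq_rpow, ← sqrt_eq_rpow]
  field_simp
  rw [show √(normL1 ω) ^ 4 = (√(normL1 ω) ^ 2) ^ 2 by ring, sq_sqrt (normL1_nonneg ω),
    sq_sqrt (normL2_nonneg ω)]
  ring
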